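/- Let u : ℝ → ℝ be three times continuously differentiable (ContDiff ℝ 3), let t ∈ ℝ and α > 0, and assume iteratedDeriv 3 u t ≠ 0. For h > 0 define the BDF2 value v h = ((1 + α)/(1 + 2*α)) * ((1 + α) * u t - (α^2/(1 + α)) * u (t - h/α) + h * deriv u (t + h)) and the generalized leapfrog predictor p h = u t + (1 + α) * h * (deriv u t) - α^2 * (u t - u (t - h/α)). Then (fun h => (v h - u (t + h)) / (v h - p h)) tends to (α + 1)/(3*α + 2) as h → 0 within (0, ∞). In other words, the local time error of the BDF2 step is asymptotically e_{n+1} ≈ ((αₙ + 1)/(3αₙ + 2))·(u_{n+1} − u^p_{n+1}). -/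

import Mathlib

/-!
Expanding `u` to third order at `t`, both the BDF2 value and the leapfrog predictor reproduce
`u (t + h)` up to a multiple of `u''' t * h ^ 3`: the BDF2 error is
`(1 + α) ^ 2 / (6α(1 + 2α)) * u''' t * h ^ 3` and the predictor error is
`-(1 + α) / (6α) * u''' t * h ^ 3`, up to `o(h ^ 3)`. Dividing numerator and denominator of the
ratio by `h ^ 3`, it tends to `a / (a - c)` for these two leading coefficients `a` and `c`, which is
`(α + 1) / (3α + 2)`.
-/

open Filter Asymptotics Topology Finset Nat

theorem ContDiff.isLittleO_sub_taylor_sum {f : ℝ → ℝ} {n : ℕ} (hf : ContDiff ℝ n f) (t : ℝ) :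
    (fun s => f (t + s) - ∑ k ∈ range (n + 1), iteratedDeriv k f t / k ! * s ^ k)
      =o[𝓝 0] (· ^ n) := by
  have hshift : Tendsto (t + ·) (𝓝 0) (𝓝 t) := by
    simpa using (continuous_const_add t).tendsto 0
  refine ((taylor_isLittleO_univ hf).comp_tendsto hshift).congr (fun s => ?_) (fun s => ?_)
  · simp only [Function.comp_apply, taylor_within_apply, iteratedDerivWithin_univ,
      add_sub_cancel_left, smul_eq_mul]
    exact congrArg _ (sum_congr rfl fun k _ => by ring)
  · simp

theorem ContDiff.isLittleO_sub_taylor_three {u : ℝ → ℝ} (hu : ContDiff ℝ 3 u) (t : ℝ) :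
    (fun s => u (t + s) - (u t + deriv u t * s + iteratedDeriv 2 u t / 2 * s ^ 2
      + iteratedDeriv 3 u t / 6 * s ^ 3)) =o[𝓝 0] (· ^ 3) :=
  (hu.isLittleO_sub_taylor_sum t).congr_left fun s => by simp [sum_range_succ, Nat.factorial]

theorem ContDiff.isLittleO_sub_taylor_two_deriv {u : ℝ → ℝ} (hu : ContDiff ℝ 3 u) (t : ℝ) :
    (fun s => deriv u (t + s) - (deriv u t + iteratedDeriv 2 u t * s
      + iteratedDeriv 3 u t / 2 * s ^ 2)) =o[𝓝 0] (· ^ 2) :=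
  ((hu.deriv' (n := 2)).isLittleO_sub_taylor_sum t).congr_left fun s => by
    simp [sum_range_succ, Nat.factorial, ← iteratedDeriv_succ']

theorem Asymptotics.IsLittleO.comp_const_mul_pow {f : ℝ → ℝ} {n : ℕ} (hf : f =o[𝓝 0] (· ^ n))
    (c : ℝ) : (fun h => f (c * h)) =o[𝓝 0] (· ^ n) := by
  have hc : Tendsto (c * ·) (𝓝 0) (𝓝 0) := by
    simpa using (continuous_const_mul c).tendsto 0
  refine (hf.comp_tendsto hc).trans_isBigO ?_
  exact (isBigO_const_mul_self (c ^ n) (· ^ n : ℝ → ℝ) (𝓝 0)).congr_left fun h => by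
    simp [mul_pow]

theorem tendsto_div_of_isLittleO {ι : Type*} {l : Filter ι} {f g w : ι → ℝ} {a b : ℝ}
    (hb : b ≠ 0) (hw : ∀ᶠ i in l, w i ≠ 0)
    (hf : (fun i => f i - a * w i) =o[l] w) (hg : (fun i => g i - b * w i) =o[l] w) :
    Tendsto (fun i => f i / g i) l (𝓝 (a / b)) := by
  have hfw : Tendsto (fun i => f i / w i) l (𝓝 a) := by
    simpa using (hf.tendsto_div_nhds_zero.add_const a).congr' <| hw.mono fun i hi => by
      simp [sub_div, hi]
  have hgw : Tendsto (fun i => g i / w i) l (𝓝 b) := by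
    simpa using (hg.tendsto_div_nhds_zero.add_const b).congr' <| hw.mono fun i hi => by
      simp [sub_div, hi]
  exact (hfw.div hgw hb).congr' <| hw.mono fun i hi => div_div_div_cancel_right₀ hi _ _

theorem tendsto_error_div_sub_predictor {ι : Type*} {l : Filter ι} {x p e w : ι → ℝ} {a c : ℝ}
    (hac : a - c ≠ 0) (hw : ∀ᶠ i in l, w i ≠ 0)
    (hx : (fun i => x i - e i - a * w i) =o[l] w) (hp : (fun i => p i - e i - c * w i) =o[l] w) :
    Tendsto (fun i => (x i - e i) / (x i - p i)) l (𝓝 (a / (a - c))) :=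
  tendsto_div_of_isLittleO hac hw hx ((hx.sub hp).congr_left fun i => by ring)

/-- The BDF2 formula solved for `u_{n+1}`, with `u_n = u t`, `u_{n-1} = u (t - h / α)` and the
right-hand side `f(u_{n+1})` replaced by the exact derivative `deriv u (t + h)`. -/
noncomputable def bdf2Step (u : ℝ → ℝ) (t α h : ℝ) : ℝ :=
  (1 + α) / (1 + 2 * α) * ((1 + α) * u t - α ^ 2 / (1 + α) * u (t - h / α) + h * deriv u (t + h))

noncomputable def leapfrogPredictor (u : ℝ → ℝ) (t α h : ℝ) : ℝ :=
  u t + (1 + α) * h * deriv u t - α ^ 2 * (u t - u (t - h / α))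

section LocalErrors

variable {u : ℝ → ℝ} (hu : ContDiff ℝ 3 u) (t : ℝ) {α : ℝ}
include hu

theorem bdf2Step_sub_isLittleO (hα : 0 < α) :
    (fun h => bdf2Step u t α h - u (t + h)
      - (1 + α) ^ 2 / (6 * α * (1 + 2 * α)) * iteratedDeriv 3 u t * h ^ 3) =o[𝓝 0] (· ^ 3) := by
  have hnow := hu.isLittleO_sub_taylor_three t
  have hprev := hnow.comp_const_mul_pow (-α⁻¹)
  have hslope := ((isBigO_refl (fun h : ℝ => h) (𝓝 0)).mul_isLittleO
    (hu.isLittleO_sub_taylor_two_deriv t)).congr_right (g₂ := (· ^ 3)) fun h => by ring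
  refine ((((hprev.const_mul_left (-(α ^ 2 / (1 + α)))).add hslope).const_mul_left
    ((1 + α) / (1 + 2 * α))).sub hnow).congr_left fun h => ?_
  rw [bdf2Step, show t + -α⁻¹ * h = t - h / α by ring]
  field_simp
  ring

theorem leapfrogPredictor_sub_isLittleO (hα : α ≠ 0) :
    (fun h => leapfrogPredictor u t α h - u (t + h)
      - -(1 + α) / (6 * α) * iteratedDeriv 3 u t * h ^ 3) =o[𝓝 0] (· ^ 3) := by
  have hnow := hu.isLittleO_sub_taylor_three t
  have hprev := hnow.comp_const_mul_pow (-α⁻¹)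
  refine ((hprev.const_mul_left (α ^ 2)).sub hnow).congr_left fun h => ?_
  rw [leapfrogPredictor, show t + -α⁻¹ * h = t - h / α by ring]
  field_simp
  ring

end LocalErrors

/-- The BDF2 local error is asymptotically `((α+1)/(3α+2))` times the
corrector-minus-predictor difference. -/
theorem bdf2_error_estimator_ratio (u : ℝ → ℝ) (hu : ContDiff ℝ 3 u)
    (t α : ℝ) (hα : 0 < α) (hd3 : iteratedDeriv 3 u t ≠ 0) :
    Filter.Tendsto
      (fun h : ℝ =>
        ((((1 + α) / (1 + 2 * α)) *
            ((1 + α) * u t - (α ^ 2 / (1 + α)) * u (t - h / α) + h * deriv u (t + h)))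
          - u (t + h)) /
        ((((1 + α) / (1 + 2 * α)) *
            ((1 + α) * u t - (α ^ 2 / (1 + α)) * u (t - h / α) + h * deriv u (t + h)))
          - (u t + (1 + α) * h * (deriv u t) - α ^ 2 * (u t - u (t - h / α)))))
      (nhdsWithin 0 (Set.Ioi 0))
      (nhds ((α + 1) / (3 * α + 2))) := by
  set d := iteratedDeriv 3 u t
  have hgap : (1 + α) ^ 2 / (6 * α * (1 + 2 * α)) * d - -(1 + α) / (6 * α) * d
      = (1 + α) * (3 * α + 2) / (6 * α * (1 + 2 * α)) * d := by
    field_simp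
    ring
  have hratio : (α + 1) / (3 * α + 2)
      = (1 + α) ^ 2 / (6 * α * (1 + 2 * α)) * d
        / ((1 + α) ^ 2 / (6 * α * (1 + 2 * α)) * d - -(1 + α) / (6 * α) * d) := by
    rw [hgap]
    field_simp
    ring
  have hh3 : ∀ᶠ h in 𝓝[>] (0 : ℝ), h ^ 3 ≠ 0 :=
    eventually_mem_nhdsWithin.mono fun h hh => pow_ne_zero 3 hh.ne'
  rw [hratio]
  exact tendsto_error_div_sub_predictor (x := bdf2Step u t α) (p := leapfrogPredictor u t α)
    (by rw [hgap]; exact mul_ne_zero (by positivity) hd3) hh3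
    ((bdf2Step_sub_isLittleO hu t hα).mono nhdsWithin_le_nhds)
    ((leapfrogPredictor_sub_isLittleO hu t hα.ne').mono nhdsWithin_le_nhds)
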